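/- arXiv:2502.09014 — 8 statements merged into one kernel-verified Lean document; each statement's English description precedes it below -/
import Mathlib

section
/- Let X be a binomial random variable with parameters n and p, where 0 < p < 1. Then the conditional probability P(X = m | X ≤ m) is strictly decreasing in m for 0 ≤ m < n. -/
open Finset

theorem stmt_2 (n : ℕ) (p : ℝ) (hp : 0 < p) (hp1 : p < 1) :
    ∀ m : ℕ, m < n →
      ((n.choose (m + 1) : ℝ) * p ^ (m + 1) * (1 - p) ^ (n - (m + 1))) /
          (∑ k ∈ Finset.range (m + 2), (n.choose k : ℝ) * p ^ k * (1 - p) ^ (n - k))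
        < ((n.choose m : ℝ) * p ^ m * (1 - p) ^ (n - m)) /
          (∑ k ∈ Finset.range (m + 1), (n.choose k : ℝ) * p ^ k * (1 - p) ^ (n - k)) := by
  intro m hm
  have hq : (0:ℝ) < 1 - p := by linarith
  set a : ℕ → ℝ := fun k => (n.choose k : ℝ) * p ^ k * (1 - p) ^ (n - k) with ha
  have hnn : ∀ k, 0 ≤ a k := by
    intro k
    have : (0:ℝ) ≤ (n.choose k : ℝ) := by positivity
    simp only [ha]
    positivity
  have hpos : ∀ k, k ≤ n → 0 < a k := by
    intro k hk
    have hc : 0 < (n.choose k : ℝ) := by exact_mod_cast Nat.choose_pos hk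
    simp only [ha]
    positivity
  have hS : ∀ M : ℕ, 0 < ∑ k ∈ Finset.range (M + 1), a k := by
    intro M
    apply Finset.sum_pos' (fun i _ => hnn i)
    exact ⟨0, Finset.mem_range.2 (Nat.succ_pos M), hpos 0 (Nat.zero_le n)⟩
  show a (m+1) / (∑ k ∈ Finset.range (m + 2), a k)
      < a m / ∑ k ∈ Finset.range (m + 1), a k
  rw [div_lt_div_iff₀ (hS (m+1)) (hS m)]
  -- key termwise inequality
  have hnat : ∀ k, k ≤ m → n.choose (m+1) * n.choose k ≤ n.choose m * n.choose (k+1) := by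
    intro k hk
    apply Nat.le_of_mul_le_mul_right _ (show 0 < (m+1)*(k+1) by positivity)
    have e1 : n.choose (m+1) * (m+1) = n.choose m * (n - m) := Nat.choose_succ_right_eq n m
    have e2 : n.choose (k+1) * (k+1) = n.choose k * (n - k) := Nat.choose_succ_right_eq n k
    calc n.choose (m+1) * n.choose k * ((m+1)*(k+1))
        = (n.choose (m+1) * (m+1)) * (n.choose k * (k+1)) := by ring
      _ = n.choose m * n.choose k * ((n - m) * (k+1)) := by rw [e1]; ring
      _ ≤ n.choose m * n.choose k * ((n - k) * (m+1)) := by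
          apply Nat.mul_le_mul_left
          exact Nat.mul_le_mul (Nat.sub_le_sub_left hk n) (by omega)
      _ = n.choose m * (n.choose k * (n - k)) * (m+1) := by ring
      _ = n.choose m * n.choose (k+1) * ((m+1)*(k+1)) := by rw [← e2]; ring
  have key : ∀ k, k ≤ m → a (m+1) * a k ≤ a m * a (k+1) := by
    intro k hk
    have hcast : (↑(n.choose (m+1) * n.choose k) : ℝ) ≤ (↑(n.choose m * n.choose (k+1)) : ℝ) := by
      exact_mod_cast hnat k hk
    push_cast at hcast
    have lhs_eq : a (m+1) * a k
        = ((n.choose (m+1) : ℝ) * n.choose k) * (p ^ (m+1+k) * (1-p) ^ (n-(m+1)+(n-k))) := by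
      simp only [ha, pow_add]; ring
    have rhs_eq : a m * a (k+1)
        = ((n.choose m : ℝ) * n.choose (k+1)) * (p ^ (m+(k+1)) * (1-p) ^ (n-m+(n-(k+1)))) := by
      simp only [ha, pow_add]; ring
    have eexp1 : m + 1 + k = m + (k+1) := by omega
    have eexp2 : n - (m+1) + (n-k) = n - m + (n-(k+1)) := by omega
    rw [lhs_eq, rhs_eq, eexp1, eexp2]
    apply mul_le_mul_of_nonneg_right hcast
    positivity
  calc a (m+1) * ∑ k ∈ Finset.range (m+1), a k
      = ∑ k ∈ Finset.range (m+1), a (m+1) * a k := Finset.mul_sum _ _ _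
    _ ≤ ∑ k ∈ Finset.range (m+1), a m * a (k+1) := by
        apply Finset.sum_le_sum
        intro k hk
        exact key k (Nat.lt_succ_iff.mp (Finset.mem_range.1 hk))
    _ = a m * ∑ k ∈ Finset.range (m+1), a (k+1) := (Finset.mul_sum _ _ _).symm
    _ < a m * ∑ k ∈ Finset.range (m+2), a k := by
        have hsp : ∑ k ∈ Finset.range (m+2), a k
            = (∑ k ∈ Finset.range (m+1), a (k+1)) + a 0 := Finset.sum_range_succ' a (m+1)
        rw [hsp, mul_add]
        have := mul_pos (hpos m hm.le) (hpos 0 (Nat.zero_le n))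
        linarith
end

section
/- For integers n ≥ 1 and 1 ≤ m ≤ n, define ζ(m, n, q) = Σ_{j=1}^m C(n−1, j−1)(1−q)^(n−j) q^(j−1) for q ∈ [0,1]. Then for every q ∈ (0,1], (1/4)·min{1, m/(n q)} ≤ (1/q)·∫₀^q ζ(m, n, t) dt ≤ min{1, m/(n q)}. -/
open Finset

/-- `ζ(m, n, q) = Σ_{j=1}^m C(n−1, j−1)(1−q)^(n−j) q^(j−1)`. -/
noncomputable def zetaFun (m n : ℕ) (q : ℝ) : ℝ :=
  ∑ j ∈ Finset.Icc 1 m, ((n - 1).choose (j - 1) : ℝ) * (1 - q) ^ (n - j) * q ^ (j - 1)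

/-!
Writing `N = n - 1`, `ζ(m, n, t) = ∑_{k < m} b_{N,k}(t)` is a partial sum of the Bernstein basis,
i.e. `P(Bin(N, t) < m)`. Hence `0 ≤ ζ ≤ 1` on `[0, 1]`, and since every `b_{N,k}` has integral
`1 / n` over `[0, 1]`, `∫₀¹ ζ = m / n`; together these give `∫₀^q ζ ≤ min q (m / n)`.
Markov's inequality `P(Bin(N, t) ≥ m) ≤ N t / m` gives `ζ(t) ≥ 1 - n t / m`, and integrating this
over `[0, r]` with `r = min q (m / n)` gives `∫₀^q ζ ≥ r - n r² / (2m) ≥ r / 2`.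
-/

open Polynomial intervalIntegral

namespace bernsteinPolynomial

lemma eval_nonneg (N k : ℕ) {t : ℝ} (h0 : 0 ≤ t) (h1 : t ≤ 1) :
    0 ≤ (bernsteinPolynomial ℝ N k).eval t := by
  have : 0 ≤ 1 - t := sub_nonneg.2 h1
  simp only [bernsteinPolynomial, eval_mul, eval_pow, eval_sub, eval_one, eval_X, eval_natCast]
  positivity

lemma sum_eval (N : ℕ) (t : ℝ) :
    ∑ k ∈ range (N + 1), (bernsteinPolynomial ℝ N k).eval t = 1 := by
  rw [← eval_finsetSum, bernsteinPolynomial.sum, eval_one]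

lemma sum_mul_eval (N : ℕ) (t : ℝ) :
    ∑ k ∈ range (N + 1), k * (bernsteinPolynomial ℝ N k).eval t = N * t := by
  simpa [eval_finsetSum, nsmul_eq_mul] using
    congrArg (eval t) (bernsteinPolynomial.sum_smul ℝ N)

/-- `(N + 1) (b_{N,k} - b_{N,k+1})` is the derivative of `b_{N+1,k+1}`, which vanishes at both
endpoints. -/
lemma integral_eval_succ {N k : ℕ} (hk : k < N) :
    ∫ t in (0 : ℝ)..1, (bernsteinPolynomial ℝ N (k + 1)).eval t
      = ∫ t in (0 : ℝ)..1, (bernsteinPolynomial ℝ N k).eval t := by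
  have hFTC := integral_eq_sub_of_hasDerivAt (a := 0) (b := 1)
    (fun t _ => (bernsteinPolynomial ℝ (N + 1) (k + 1)).hasDerivAt t)
    ((Polynomial.continuous _).intervalIntegrable _ _)
  simp only [bernsteinPolynomial.derivative_succ, eval_mul, eval_sub, eval_natCast,
    eval_at_0, eval_at_1, if_neg (Nat.succ_ne_zero k), if_neg (by omega : k + 1 ≠ N + 1),
    sub_zero, Nat.add_sub_cancel] at hFTC
  rw [integral_const_mul, integral_sub ((Polynomial.continuous _).intervalIntegrable _ _)
    ((Polynomial.continuous _).intervalIntegrable _ _)] at hFTC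
  have hN : ((N : ℝ) + 1) ≠ 0 := by positivity
  push_cast at hFTC
  linarith [(mul_eq_zero.1 hFTC).resolve_left hN]

lemma integral_eval {N k : ℕ} (hk : k ≤ N) :
    ∫ t in (0 : ℝ)..1, (bernsteinPolynomial ℝ N k).eval t = 1 / (N + 1) := by
  have hconst : ∀ k ≤ N, ∫ t in (0 : ℝ)..1, (bernsteinPolynomial ℝ N k).eval t
      = ∫ t in (0 : ℝ)..1, (bernsteinPolynomial ℝ N 0).eval t := by
    intro k hk
    induction k with
    | zero => rfl
    | succ k ih => rw [integral_eval_succ hk, ih (by omega)]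
  have hsum :
      ∑ k ∈ range (N + 1), ∫ t in (0 : ℝ)..1, (bernsteinPolynomial ℝ N k).eval t = 1 := by
    rw [← integral_finsetSum fun _ _ => ((Polynomial.continuous _).intervalIntegrable _ _)]
    simp [sum_eval]
  rw [sum_congr rfl fun k hk => hconst k (Nat.lt_succ_iff.1 (mem_range.1 hk)), sum_const,
    card_range, nsmul_eq_mul] at hsum
  rw [hconst k hk, eq_div_iff (by positivity)]
  push_cast at hsum
  linarith

end bernsteinPolynomial

lemma zetaFun_eq_sum_bernsteinPolynomial (m n : ℕ) (t : ℝ) :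
    zetaFun m n t = ∑ k ∈ range m, (bernsteinPolynomial ℝ (n - 1) k).eval t := by
  rw [zetaFun, ← Ico_add_one_right_eq_Icc, sum_Ico_eq_sum_range, Nat.add_sub_cancel]
  refine sum_congr rfl fun k _ => ?_
  simp only [bernsteinPolynomial, eval_mul, eval_pow, eval_sub, eval_one, eval_X, eval_natCast,
    Nat.add_sub_cancel_left, ← Nat.sub_sub]
  ring

lemma continuous_zetaFun (m n : ℕ) : Continuous (zetaFun m n) := by
  simp_rw [funext (zetaFun_eq_sum_bernsteinPolynomial m n)]
  fun_prop

lemma zetaFun_nonneg (m n : ℕ) {t : ℝ} (h0 : 0 ≤ t) (h1 : t ≤ 1) : 0 ≤ zetaFun m n t := by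
  rw [zetaFun_eq_sum_bernsteinPolynomial]
  exact sum_nonneg fun k _ => bernsteinPolynomial.eval_nonneg _ _ h0 h1

lemma zetaFun_add_sum_Ico {m n : ℕ} (hmn : m ≤ n) (hn : 0 < n) (t : ℝ) :
    zetaFun m n t + ∑ k ∈ Ico m n, (bernsteinPolynomial ℝ (n - 1) k).eval t = 1 := by
  rw [zetaFun_eq_sum_bernsteinPolynomial, sum_range_add_sum_Ico _ hmn,
    ← bernsteinPolynomial.sum_eval (n - 1) t, Nat.sub_add_cancel hn]

lemma zetaFun_le_one {m n : ℕ} (hmn : m ≤ n) {t : ℝ} (h0 : 0 ≤ t) (h1 : t ≤ 1) :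
    zetaFun m n t ≤ 1 := by
  rcases Nat.eq_zero_or_pos n with rfl | hn
  · simp [Nat.le_zero.1 hmn, zetaFun]
  rw [← zetaFun_add_sum_Ico hmn hn t, le_add_iff_nonneg_right]
  exact sum_nonneg fun k _ => bernsteinPolynomial.eval_nonneg _ _ h0 h1

lemma one_sub_le_zetaFun {m n : ℕ} (hm : 0 < m) (hmn : m ≤ n) {t : ℝ} (h0 : 0 ≤ t)
    (h1 : t ≤ 1) :
    1 - n * t / m ≤ zetaFun m n t := by
  have hn : 0 < n := hm.trans_le hmn
  have hmR : (0 : ℝ) < m := by exact_mod_cast hm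
  have htail : m * ∑ k ∈ Ico m n, (bernsteinPolynomial ℝ (n - 1) k).eval t ≤ n * t := calc
    _ = ∑ k ∈ Ico m n, m * (bernsteinPolynomial ℝ (n - 1) k).eval t := mul_sum _ _ _
    _ ≤ ∑ k ∈ Ico m n, k * (bernsteinPolynomial ℝ (n - 1) k).eval t := by
      refine sum_le_sum fun k hk => ?_
      gcongr
      · exact bernsteinPolynomial.eval_nonneg _ _ h0 h1
      · exact (mem_Ico.1 hk).1
    _ ≤ ∑ k ∈ range (n - 1 + 1), k * (bernsteinPolynomial ℝ (n - 1) k).eval t := by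
      refine sum_le_sum_of_subset_of_nonneg ?_ fun k _ _ => ?_
      · intro k hk
        simp only [mem_Ico, mem_range] at hk ⊢
        omega
      · exact mul_nonneg k.cast_nonneg (bernsteinPolynomial.eval_nonneg _ _ h0 h1)
    _ = (n - 1 : ℕ) * t := bernsteinPolynomial.sum_mul_eval _ _
    _ ≤ n * t := by gcongr; exact_mod_cast Nat.sub_le n 1
  rw [sub_le_iff_le_add, ← zetaFun_add_sum_Ico hmn hn t, add_le_add_iff_left, le_div_iff₀' hmR]
  exact htail

lemma integral_zetaFun_zero_one {m n : ℕ} (hmn : m ≤ n) :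
    ∫ t in (0 : ℝ)..1, zetaFun m n t = m / n := by
  rcases Nat.eq_zero_or_pos n with rfl | hn
  · simp [Nat.le_zero.1 hmn, zetaFun]
  simp_rw [zetaFun_eq_sum_bernsteinPolynomial]
  rw [integral_finsetSum fun _ _ => (Polynomial.continuous _).intervalIntegrable _ _,
    sum_congr rfl fun k hk => bernsteinPolynomial.integral_eval (by rw [mem_range] at hk; omega)]
  simp [Nat.cast_sub (Nat.one_le_iff_ne_zero.2 hn.ne'), div_eq_mul_inv]

lemma integral_zetaFun_le_min {m n : ℕ} (hmn : m ≤ n) {q : ℝ} (hq0 : 0 ≤ q) (hq1 : q ≤ 1) :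
    ∫ t in (0 : ℝ)..q, zetaFun m n t ≤ min q (m / n) := by
  refine le_min ?_ ?_
  · calc ∫ t in (0 : ℝ)..q, zetaFun m n t ≤ ∫ _ in (0 : ℝ)..q, (1 : ℝ) :=
          integral_mono_on hq0 ((continuous_zetaFun m n).intervalIntegrable _ _)
            intervalIntegrable_const fun t ht => zetaFun_le_one hmn ht.1 (ht.2.trans hq1)
      _ = q := by simp
  · rw [← integral_zetaFun_zero_one hmn]
    refine integral_mono_interval le_rfl hq0 hq1 ?_
      ((continuous_zetaFun m n).intervalIntegrable _ _)
    filter_upwards [MeasureTheory.ae_restrict_mem measurableSet_Ioc] with t ht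
    exact zetaFun_nonneg m n ht.1.le ht.2

lemma min_div_two_le_integral_zetaFun {m n : ℕ} (hm : 0 < m) (hmn : m ≤ n) {q : ℝ}
    (hq0 : 0 ≤ q) (hq1 : q ≤ 1) :
    min q (m / n) / 2 ≤ ∫ t in (0 : ℝ)..q, zetaFun m n t := by
  set r := min q (m / n)
  have hmR : (0 : ℝ) < m := by exact_mod_cast hm
  have hnR : (0 : ℝ) < n := by exact_mod_cast hm.trans_le hmn
  have hr0 : 0 ≤ r := le_min hq0 (by positivity)
  have hrq : r ≤ q := min_le_left _ _
  have hr1 : r ≤ 1 :=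
    (min_le_right _ _).trans (div_le_one_of_le₀ (by exact_mod_cast hmn) n.cast_nonneg)
  have hnr : n * r ≤ m := (le_div_iff₀' hnR).1 (min_le_right _ _)
  calc r / 2 ≤ r - n * r ^ 2 / (2 * m) := by
        rw [le_sub_iff_add_le, div_add_div _ _ two_ne_zero (by positivity),
          div_le_iff₀ (by positivity)]
        nlinarith
    _ = ∫ t in (0 : ℝ)..r, (1 - n * t / m) := by
        rw [integral_sub intervalIntegrable_const
          ((by fun_prop : Continuous fun t : ℝ => n * t / m).intervalIntegrable _ _),
          integral_div, integral_const_mul, integral_id, integral_const]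
        simp only [sub_zero, smul_eq_mul, mul_one, ne_eq, OfNat.ofNat_ne_zero, not_false_eq_true,
          zero_pow, sub_right_inj]
        ring
    _ ≤ ∫ t in (0 : ℝ)..r, zetaFun m n t :=
        integral_mono_on hr0
          ((by fun_prop : Continuous fun t : ℝ => 1 - n * t / m).intervalIntegrable _ _)
          ((continuous_zetaFun m n).intervalIntegrable _ _)
          fun t ht => one_sub_le_zetaFun hm hmn ht.1 (ht.2.trans hr1)
    _ ≤ ∫ t in (0 : ℝ)..q, zetaFun m n t := by
        refine integral_mono_interval le_rfl hr0 hrq ?_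
          ((continuous_zetaFun m n).intervalIntegrable _ _)
        filter_upwards [MeasureTheory.ae_restrict_mem measurableSet_Ioc] with t ht
        exact zetaFun_nonneg m n ht.1.le (ht.2.trans hq1)

theorem stmt_7_general (n m : ℕ) (hm1 : 1 ≤ m) (hmn : m ≤ n)
    (q : ℝ) (hq0 : 0 < q) (hq1 : q ≤ 1) :
    (1 / 4) * min 1 ((m : ℝ) / (n * q)) ≤ (1 / q) * ∫ t in (0:ℝ)..q, zetaFun m n t
      ∧ (1 / q) * ∫ t in (0:ℝ)..q, zetaFun m n t ≤ min 1 ((m : ℝ) / (n * q)) := by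
  have hmin : min 1 ((m : ℝ) / (n * q)) = min q (m / n) / q := by
    rw [← min_div_div_right hq0.le, div_self hq0.ne', div_div]
  have hr0 : 0 ≤ min q ((m : ℝ) / n) := le_min hq0.le (by positivity)
  have hlower := min_div_two_le_integral_zetaFun hm1 hmn hq0.le hq1
  simp only [hmin, one_div_mul_eq_div]
  refine ⟨?_, div_le_div_of_nonneg_right (integral_zetaFun_le_min hmn hq0.le hq1) hq0.le⟩
  rw [div_right_comm]
  exact div_le_div_of_nonneg_right (by linarith) hq0.le

theorem stmt_7 (n m : ℕ) (hn : 1 ≤ n) (hm1 : 1 ≤ m) (hmn : m ≤ n)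
    (q : ℝ) (hq0 : 0 < q) (hq1 : q ≤ 1) :
    (1 / 4) * min 1 ((m : ℝ) / (n * q)) ≤ (1 / q) * ∫ t in (0:ℝ)..q, zetaFun m n t
      ∧ (1 / q) * ∫ t in (0:ℝ)..q, zetaFun m n t ≤ min 1 ((m : ℝ) / (n * q)) :=
  stmt_7_general n m hm1 hmn q hq0 hq1
end

section
/- For n ≥ 2, define H_n(q) = (1/n)(1 − (1−q)^n − n q (1−q)^(n−1)) for q ∈ [0,1]. Then H_n(q) = ∫₀^q (n−1)(1−t)^(n−2) t dt, and there exist positive constants c, C (independent of n and q) such that c·min{n q², 1/n} ≤ H_n(q) ≤ C·min{n q², 1/n} for all q ∈ [0,1] and all n ≥ 2. -/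
/-- `H_n(q) = (1/n)(1 − (1−q)^n − n q (1−q)^(n−1))`. -/
noncomputable def Hfun (n : ℕ) (q : ℝ) : ℝ :=
  (1 / n) * (1 - (1 - q) ^ n - n * q * (1 - q) ^ (n - 1))

/-!
`Hfun n` vanishes at `0` and has derivative `(n - 1) (1 - t)^(n - 2) t`, which gives the integral
formula. The density is at most `(n - 1) t`, so `H_n(q) ≤ n q²`, while `H_n(q) ≤ 1/n` is immediate.
For `t ≤ 1/(2n)` Bernoulli's inequality gives `(1 - t)^(n - 2) ≥ 1/2`, hence `H_n(q) ≥ n q²/8` on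
`[0, 1/(2n)]`; beyond that point monotonicity keeps `H_n(q) ≥ H_n(1/(2n)) ≥ 1/(32 n)`.
-/

open Set intervalIntegral

def Hdensity (n : ℕ) (t : ℝ) : ℝ := (n - 1 : ℝ) * (1 - t) ^ (n - 2) * t

variable {n : ℕ} {q t : ℝ}

lemma Hfun_apply_zero (n : ℕ) : Hfun n 0 = 0 := by simp [Hfun]

lemma continuous_Hdensity (n : ℕ) : Continuous (Hdensity n) := by
  unfold Hdensity; fun_prop

lemma hasDerivAt_Hfun (hn : 1 ≤ n) (t : ℝ) : HasDerivAt (Hfun n) (Hdensity n t) t := by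
  obtain ⟨m, rfl⟩ : ∃ m, n = m + 1 := ⟨n - 1, by omega⟩
  have hsub : HasDerivAt (fun t : ℝ => 1 - t) (-1) t := by
    simpa using (hasDerivAt_id t).const_sub 1
  have h := (((hasDerivAt_const t (1 : ℝ)).sub (hsub.pow (m + 1))).sub
    (((hasDerivAt_id t).const_mul ((m + 1 : ℕ) : ℝ)).mul (hsub.pow m))).const_mul
      (1 / ((m + 1 : ℕ) : ℝ))
  have hfun : Hfun (m + 1) = fun x =>
      1 / ((m + 1 : ℕ) : ℝ) * (1 - (1 - x) ^ (m + 1) - (m + 1 : ℕ) * id x * (1 - x) ^ m) := by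
    funext x; simp [Hfun]
  rw [hfun]
  refine h.congr_deriv ?_
  rcases m with _ | m
  · simp [Hdensity]
  · simp only [Hdensity, show m + 1 + 1 - 2 = m by omega, Nat.add_sub_cancel, Nat.cast_succ, id,
      Pi.pow_apply]
    field_simp
    ring

lemma Hfun_eq_integral (hn : 1 ≤ n) (q : ℝ) : Hfun n q = ∫ t in (0 : ℝ)..q, Hdensity n t := by
  rw [integral_eq_sub_of_hasDerivAt (fun t _ => hasDerivAt_Hfun hn t)
    ((continuous_Hdensity n).intervalIntegrable 0 q), Hfun_apply_zero, sub_zero]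

lemma Hdensity_nonneg (hn : 1 ≤ n) (ht0 : 0 ≤ t) (ht1 : t ≤ 1) : 0 ≤ Hdensity n t := by
  have : (0 : ℝ) ≤ n - 1 := by simpa using hn
  have : 0 ≤ 1 - t := by linarith
  unfold Hdensity; positivity

lemma Hdensity_le (hn : 1 ≤ n) (ht0 : 0 ≤ t) (ht1 : t ≤ 1) : Hdensity n t ≤ (n - 1) * t := by
  have : (0 : ℝ) ≤ n - 1 := by simpa using hn
  calc Hdensity n t ≤ (n - 1) * 1 * t := by
        unfold Hdensity; gcongr; exact pow_le_one₀ (by linarith) (by linarith)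
    _ = (n - 1) * t := by ring

lemma half_mul_le_Hdensity (hn : 1 ≤ n) (ht0 : 0 ≤ t) (ht : 2 * n * t ≤ 1) :
    (n - 1) / 2 * t ≤ Hdensity n t := by
  have : (0 : ℝ) ≤ n - 1 := by simpa using hn
  have hcast : ((n - 2 : ℕ) : ℝ) ≤ n := by exact_mod_cast Nat.sub_le n 2
  have hbern : 1 + (n - 2 : ℕ) * -t ≤ (1 - t) ^ (n - 2) := by
    simpa [sub_eq_add_neg] using one_add_mul_le_pow (by nlinarith : (-2 : ℝ) ≤ -t) (n - 2)
  calc (n - 1) / 2 * t = (n - 1) * (1 / 2) * t := by ring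
    _ ≤ Hdensity n t := by unfold Hdensity; gcongr; nlinarith

lemma monotoneOn_Hfun (hn : 1 ≤ n) : MonotoneOn (Hfun n) (Icc 0 1) := by
  refine monotoneOn_of_hasDerivWithinAt_nonneg (convex_Icc 0 1)
    (fun t _ => (hasDerivAt_Hfun hn t).continuousAt.continuousWithinAt)
    (fun t _ => (hasDerivAt_Hfun hn t).hasDerivWithinAt) fun t ht => ?_
  rw [interior_Icc] at ht
  exact Hdensity_nonneg hn ht.1.le ht.2.le

lemma integral_const_mul_id (a q : ℝ) : ∫ t in (0 : ℝ)..q, a * t = a * q ^ 2 / 2 := by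
  rw [integral_const_mul, integral_id]; ring

lemma Hfun_le_inv (hq0 : 0 ≤ q) (hq1 : q ≤ 1) : Hfun n q ≤ 1 / n := by
  have : 0 ≤ (1 - q) ^ n := pow_nonneg (by linarith) n
  have : 0 ≤ n * q * (1 - q) ^ (n - 1) := by
    have : 0 ≤ 1 - q := by linarith
    positivity
  unfold Hfun
  exact mul_le_of_le_one_right (by positivity) (by linarith)

lemma Hfun_le_mul_sq (hn : 1 ≤ n) (hq0 : 0 ≤ q) (hq1 : q ≤ 1) : Hfun n q ≤ n * q ^ 2 := by
  calc Hfun n q ≤ ∫ t in (0 : ℝ)..q, (n - 1) * t := by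
        rw [Hfun_eq_integral hn]
        exact integral_mono_on hq0 ((continuous_Hdensity n).intervalIntegrable 0 q)
          ((by fun_prop : Continuous fun t : ℝ => (n - 1) * t).intervalIntegrable 0 q)
          fun t ht => Hdensity_le hn ht.1 (ht.2.trans hq1)
    _ ≤ n * q ^ 2 := by rw [integral_const_mul_id]; nlinarith [sq_nonneg q]

lemma mul_sq_le_Hfun (hn : 2 ≤ n) (hq0 : 0 ≤ q) (hq : 2 * n * q ≤ 1) :
    n * q ^ 2 / 8 ≤ Hfun n q := by
  have hn' : (2 : ℝ) ≤ n := by exact_mod_cast hn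
  calc n * q ^ 2 / 8 ≤ ∫ t in (0 : ℝ)..q, (n - 1) / 2 * t := by
        rw [integral_const_mul_id]; nlinarith [sq_nonneg q]
    _ ≤ Hfun n q := by
        rw [Hfun_eq_integral (by omega)]
        exact integral_mono_on hq0
          ((by fun_prop : Continuous fun t : ℝ => (n - 1) / 2 * t).intervalIntegrable 0 q)
          ((continuous_Hdensity n).intervalIntegrable 0 q)
          fun t ht => half_mul_le_Hdensity (by omega) ht.1 (by nlinarith [ht.2])

lemma inv_le_Hfun (hn : 2 ≤ n) (hq : 1 ≤ 2 * n * q) (hq1 : q ≤ 1) : 1 / n / 32 ≤ Hfun n q := by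
  have hn' : (0 : ℝ) < n := by positivity
  have hq0 : 0 ≤ 1 / (2 * n : ℝ) := by positivity
  have hq' : 1 / (2 * n : ℝ) ≤ q := by rw [div_le_iff₀ (by positivity)]; linarith
  calc 1 / n / 32 = (n : ℝ) * (1 / (2 * n)) ^ 2 / 8 := by field_simp; ring
    _ ≤ Hfun n (1 / (2 * n)) := mul_sq_le_Hfun hn hq0 (by field_simp; rfl)
    _ ≤ Hfun n q := monotoneOn_Hfun (by omega) ⟨hq0, hq'.trans hq1⟩ ⟨hq0.trans hq', hq1⟩ hq'

lemma min_div_le_Hfun (hn : 2 ≤ n) (hq0 : 0 ≤ q) (hq1 : q ≤ 1) :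
    min (n * q ^ 2) (1 / n) / 32 ≤ Hfun n q := by
  have hn' : (0 : ℝ) < n := by positivity
  rcases le_total (2 * n * q) 1 with hq | hq
  · calc min (n * q ^ 2) (1 / n) / 32 ≤ n * q ^ 2 / 8 := by
          have := min_le_left (n * q ^ 2) (1 / n); nlinarith [sq_nonneg q]
      _ ≤ Hfun n q := mul_sq_le_Hfun hn hq0 hq
  · calc min (n * q ^ 2) (1 / n) / 32 ≤ 1 / n / 32 :=
          div_le_div_of_nonneg_right (min_le_right _ _) (by norm_num)
      _ ≤ Hfun n q := inv_le_Hfun hn hq hq1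

lemma Hfun_le_min (hn : 1 ≤ n) (hq0 : 0 ≤ q) (hq1 : q ≤ 1) :
    Hfun n q ≤ min (n * q ^ 2) (1 / n) :=
  le_min (Hfun_le_mul_sq hn hq0 hq1) (Hfun_le_inv hq0 hq1)

theorem stmt_9 :
    (∀ n : ℕ, 2 ≤ n → ∀ q ∈ Set.Icc (0:ℝ) 1,
        Hfun n q = ∫ t in (0:ℝ)..q, (n - 1 : ℝ) * (1 - t) ^ (n - 2) * t)
      ∧ ∃ c C : ℝ, 0 < c ∧ 0 < C ∧
          ∀ n : ℕ, 2 ≤ n → ∀ q ∈ Set.Icc (0:ℝ) 1,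
            c * min (n * q ^ 2) (1 / n) ≤ Hfun n q ∧
              Hfun n q ≤ C * min (n * q ^ 2) (1 / n) := by
  refine ⟨fun n hn q _ => Hfun_eq_integral (by omega) q, 1 / 32, 1, by norm_num, one_pos, ?_⟩
  rintro n hn q ⟨hq0, hq1⟩
  constructor
  · simpa [div_eq_inv_mul, mul_comm] using min_div_le_Hfun hn hq0 hq1
  · simpa using Hfun_le_min (by omega) hq0 hq1
end

section
/- Let F be a continuous strictly increasing CDF on [0, M] with bounded inverse and continuous positive density. In the n-contestant winner-take-all contest without a shortlist, the ex-ante maximum individual effort and total effort are both Θ(1) as n → ∞; i.e., S(n,n,1) and S^{(1)}(n,n,1) are bounded above and below by positive constants independent of n. -/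
/-!
Each effort has the form `n ∫₀¹ |v'(q)| (∫₀^q k(t) dt) dq` for a kernel `k ≥ 0`, so the bounds
`L' ≤ |v'| ≤ L` squeeze it between `L'` and `L` times `n ∫₀¹ ∫₀^q k = n ∫₀¹ (1 - t) k(t) dt`
(integration by parts). After the substitution `s = 1 - t` these are integrals of polynomials:
`(n - 1)/(n + 1)` for the total effort and `(n - 1)/(2n)` for the maximum individual effort,
both in `[1/4, 1]` once `n ≥ 2`.
-/

/-- Total effort of the `n`-contestant winner-take-all contest in quantile form:
`S(n,n,1) = n ∫₀¹ |v'(q)| ∫₀^q (n−1)(1−t)^(n−2) t dt dq`. -/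
noncomputable def totalEffortWTA (v' : ℝ → ℝ) (n : ℕ) : ℝ :=
  n * ∫ q in (0:ℝ)..1, |v' q| * ∫ t in (0:ℝ)..q, (n - 1 : ℝ) * (1 - t) ^ (n - 2) * t

/-- Maximum individual effort of the `n`-contestant winner-take-all contest in quantile
form: `S⁽¹⁾(n,n,1) = n ∫₀¹ |v'(q)| ∫₀^q (n−1)(1−t)^(n−2) (∫₀^t (1−p)^(n−1) dp) dt dq`. -/
noncomputable def maxEffortWTA (v' : ℝ → ℝ) (n : ℕ) : ℝ :=
  n * ∫ q in (0:ℝ)..1, |v' q| *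
    ∫ t in (0:ℝ)..q, (n - 1 : ℝ) * (1 - t) ^ (n - 2) * ∫ p in (0:ℝ)..t, (1 - p) ^ (n - 1)

open MeasureTheory intervalIntegral Set

theorem intervalIntegrable_of_hasDerivAt_of_abs_le {v v' : ℝ → ℝ} {a b L : ℝ} (hab : a ≤ b)
    (hderiv : ∀ q ∈ Icc a b, HasDerivAt v (v' q) q) (hbound : ∀ q ∈ Icc a b, |v' q| ≤ L) :
    IntervalIntegrable v' volume a b := by
  rw [intervalIntegrable_iff_integrableOn_Ioc_of_le hab]
  refine IntegrableOn.of_bound measure_Ioc_lt_top ?_ L ?_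
  · refine (measurable_deriv v).aestronglyMeasurable.congr ?_
    filter_upwards [ae_restrict_mem measurableSet_Ioc] with q hq
    exact (hderiv q (Ioc_subset_Icc_self hq)).deriv
  · filter_upwards [ae_restrict_mem measurableSet_Ioc] with q hq
    exact hbound q (Ioc_subset_Icc_self hq)

theorem integral_integral_eq_integral_sub_mul {f : ℝ → ℝ} (hf : Continuous f) (a b : ℝ) :
    ∫ q in a..b, ∫ t in a..q, f t = ∫ t in a..b, (b - t) * f t := by
  have h := integral_mul_deriv_eq_deriv_mul (u := fun q => ∫ t in a..q, f t) (u' := f)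
    (v := fun q => q - b) (v' := fun _ => 1) (a := a) (b := b)
    (fun x _ => (hf.integral_hasStrictDerivAt a x).hasDerivAt)
    (fun x _ => (hasDerivAt_id x).sub_const b) (hf.intervalIntegrable _ _) intervalIntegrable_const
  simp only [mul_one, sub_self, mul_zero, integral_same, zero_mul, zero_sub] at h
  rw [h, ← intervalIntegral.integral_neg]
  congr 1 with t
  ring

theorem integral_mul_primitive_mem_Icc {g k : ℝ → ℝ} {a b m M : ℝ} (hab : a ≤ b)
    (hg : IntervalIntegrable g volume a b) (hk : Continuous k) (hk0 : ∀ t ∈ Icc a b, 0 ≤ k t)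
    (hm : ∀ q ∈ Icc a b, m ≤ g q) (hM : ∀ q ∈ Icc a b, g q ≤ M) :
    ∫ q in a..b, g q * ∫ t in a..q, k t ∈
      Icc (m * ∫ t in a..b, (b - t) * k t) (M * ∫ t in a..b, (b - t) * k t) := by
  have hW : Continuous fun q => ∫ t in a..q, k t :=
    continuous_primitive (fun _ _ => hk.intervalIntegrable _ _) a
  have hW0 : ∀ q ∈ Icc a b, 0 ≤ ∫ t in a..q, k t := fun q hq =>
    integral_nonneg hq.1 fun t ht => hk0 t ⟨ht.1, ht.2.trans hq.2⟩
  have hgW : IntervalIntegrable (fun q => g q * ∫ t in a..q, k t) volume a b :=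
    hg.mul_continuousOn hW.continuousOn
  rw [← integral_integral_eq_integral_sub_mul hk, ← intervalIntegral.integral_const_mul,
    ← intervalIntegral.integral_const_mul]
  exact ⟨integral_mono_on hab ((hW.intervalIntegrable a b).const_mul m) hgW
      fun q hq => mul_le_mul_of_nonneg_right (hm q hq) (hW0 q hq),
    integral_mono_on hab hgW ((hW.intervalIntegrable a b).const_mul M)
      fun q hq => mul_le_mul_of_nonneg_right (hM q hq) (hW0 q hq)⟩

theorem mul_mem_Icc_of_mem_Icc_mul {n x I m M : ℝ} (hn : 0 ≤ n) (hm : 0 ≤ m) (hM : 0 ≤ M)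
    (hx : x ∈ Icc (m * I) (M * I)) (hI : n * I ∈ Icc (1 / 4) 1) : n * x ∈ Icc (m / 4) M := by
  obtain ⟨hx₁, hx₂⟩ := hx
  obtain ⟨hI₁, hI₂⟩ := hI
  constructor <;> nlinarith [mul_le_mul_of_nonneg_left hx₁ hn, mul_le_mul_of_nonneg_left hx₂ hn]

theorem integral_one_sub_pow (k : ℕ) (t : ℝ) :
    ∫ p in (0:ℝ)..t, (1 - p) ^ k = (1 - (1 - t) ^ (k + 1)) / (k + 1) := by
  simp [intervalIntegral.integral_comp_sub_left (fun x : ℝ => x ^ k), integral_pow]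

noncomputable def totalEffortKernel (n : ℕ) (t : ℝ) : ℝ := (n - 1 : ℝ) * (1 - t) ^ (n - 2) * t

noncomputable def maxEffortKernel (n : ℕ) (t : ℝ) : ℝ :=
  (n - 1 : ℝ) * (1 - t) ^ (n - 2) * ∫ p in (0:ℝ)..t, (1 - p) ^ (n - 1)

theorem continuous_totalEffortKernel (n : ℕ) : Continuous (totalEffortKernel n) := by
  unfold totalEffortKernel
  fun_prop

theorem continuous_maxEffortKernel (n : ℕ) : Continuous (maxEffortKernel n) := by
  unfold maxEffortKernel
  simp only [integral_one_sub_pow]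
  fun_prop

theorem totalEffortKernel_nonneg {n : ℕ} (hn : 1 ≤ n) {t : ℝ} (ht : t ∈ Icc (0:ℝ) 1) :
    0 ≤ totalEffortKernel n t := by
  have hn' : (1:ℝ) ≤ n := by exact_mod_cast hn
  exact mul_nonneg (mul_nonneg (by linarith) (pow_nonneg (by linarith [ht.2]) _)) ht.1

theorem integral_one_sub_mul_totalEffortKernel {n : ℕ} (hn : 2 ≤ n) :
    ∫ t in (0:ℝ)..1, (1 - t) * totalEffortKernel n t = (n - 1) / (n * (n + 1)) := by
  obtain ⟨m, rfl⟩ := Nat.exists_eq_add_of_le' hn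
  have h : ∀ t : ℝ, (1 - t) * totalEffortKernel (m + 2) t
      = (fun s : ℝ => (m + 1) * (s ^ (m + 1) - s ^ (m + 2))) (1 - t) := by
    intro t
    simp only [totalEffortKernel]
    push_cast
    ring
  simp only [h, intervalIntegral.integral_comp_sub_left
    (fun s : ℝ => (m + 1) * (s ^ (m + 1) - s ^ (m + 2)))]
  rw [intervalIntegral.integral_const_mul,
    integral_sub (intervalIntegrable_pow _) (intervalIntegrable_pow _), integral_pow, integral_pow]
  push_cast
  field_simp
  ring

theorem natCast_mul_integral_one_sub_mul_totalEffortKernel_mem_Icc {n : ℕ} (hn : 2 ≤ n) :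
    (n : ℝ) * ∫ t in (0:ℝ)..1, (1 - t) * totalEffortKernel n t ∈ Icc (1 / 4) 1 := by
  have hn' : (2:ℝ) ≤ n := by exact_mod_cast hn
  have h : (n:ℝ) * ((n - 1) / (n * (n + 1))) = (n - 1) / (n + 1) := by field_simp
  rw [integral_one_sub_mul_totalEffortKernel hn, h, mem_Icc, le_div_iff₀ (by linarith),
    div_le_one (by linarith)]
  constructor <;> linarith

theorem maxEffortKernel_nonneg {n : ℕ} (hn : 1 ≤ n) {t : ℝ} (ht : t ∈ Icc (0:ℝ) 1) :
    0 ≤ maxEffortKernel n t := by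
  have hn' : (1:ℝ) ≤ n := by exact_mod_cast hn
  exact mul_nonneg (mul_nonneg (by linarith) (pow_nonneg (by linarith [ht.2]) _))
    (integral_nonneg ht.1 fun p hp => pow_nonneg (by linarith [hp.2, ht.2]) _)

theorem integral_one_sub_mul_maxEffortKernel {n : ℕ} (hn : 2 ≤ n) :
    ∫ t in (0:ℝ)..1, (1 - t) * maxEffortKernel n t = (n - 1) / (2 * n ^ 2) := by
  obtain ⟨m, rfl⟩ := Nat.exists_eq_add_of_le' hn
  have h : ∀ t : ℝ, (1 - t) * maxEffortKernel (m + 2) t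
      = (fun s : ℝ => (m + 1) / (m + 2) * (s ^ (m + 1) - s ^ (2 * m + 3))) (1 - t) := by
    intro t
    simp only [maxEffortKernel, integral_one_sub_pow]
    push_cast
    field_simp
    ring
  simp only [h, intervalIntegral.integral_comp_sub_left
    (fun s : ℝ => (m + 1) / (m + 2) * (s ^ (m + 1) - s ^ (2 * m + 3)))]
  rw [intervalIntegral.integral_const_mul,
    integral_sub (intervalIntegrable_pow _) (intervalIntegrable_pow _), integral_pow, integral_pow]
  push_cast
  field_simp
  ring

theorem natCast_mul_integral_one_sub_mul_maxEffortKernel_mem_Icc {n : ℕ} (hn : 2 ≤ n) :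
    (n : ℝ) * ∫ t in (0:ℝ)..1, (1 - t) * maxEffortKernel n t ∈ Icc (1 / 4) 1 := by
  have hn' : (2:ℝ) ≤ n := by exact_mod_cast hn
  have h : (n:ℝ) * ((n - 1) / (2 * n ^ 2)) = (n - 1) / (2 * n) := by field_simp
  rw [integral_one_sub_mul_maxEffortKernel hn, h, mem_Icc, le_div_iff₀ (by linarith),
    div_le_one (by linarith)]
  constructor <;> linarith

theorem stmt_11 (v v' : ℝ → ℝ) (L' L : ℝ) (hL' : 0 < L') (hL : 0 < L)
    (hderiv : ∀ q ∈ Set.Icc (0:ℝ) 1, HasDerivAt v (v' q) q)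
    (hlow : ∀ q ∈ Set.Icc (0:ℝ) 1, L' ≤ |v' q|)
    (hup : ∀ q ∈ Set.Icc (0:ℝ) 1, |v' q| ≤ L) :
    ∃ c C : ℝ, 0 < c ∧ 0 < C ∧
      ∀ n : ℕ, 2 ≤ n →
        (c ≤ totalEffortWTA v' n ∧ totalEffortWTA v' n ≤ C) ∧
          (c ≤ maxEffortWTA v' n ∧ maxEffortWTA v' n ≤ C) := by
  have hv' : IntervalIntegrable (fun q => |v' q|) volume 0 1 :=
    (intervalIntegrable_of_hasDerivAt_of_abs_le zero_le_one hderiv hup).abs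
  refine ⟨L' / 4, L, by positivity, hL, fun n hn => ⟨?_, ?_⟩⟩
  · exact mul_mem_Icc_of_mem_Icc_mul n.cast_nonneg hL'.le hL.le
      (integral_mul_primitive_mem_Icc (k := totalEffortKernel n) zero_le_one hv'
        (continuous_totalEffortKernel n) (fun _ => totalEffortKernel_nonneg (by omega)) hlow hup)
      (natCast_mul_integral_one_sub_mul_totalEffortKernel_mem_Icc hn)
  · exact mul_mem_Icc_of_mem_Icc_mul n.cast_nonneg hL'.le hL.le
      (integral_mul_primitive_mem_Icc (k := maxEffortKernel n) zero_le_one hv'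
        (continuous_maxEffortKernel n) (fun _ => maxEffortKernel_nonneg (by omega)) hlow hup)
      (natCast_mul_integral_one_sub_mul_maxEffortKernel_mem_Icc hn)
end

section
/- The equation ln k = (2 − k)(k − 1) has exactly one solution k̄ in the open interval (0, 1), and k̄ ∈ (0.31, 0.32). -/
/-!
With `c k = (2 - k) * (k - 1) - log k` we have `c' k = -(2k - 1)(k - 1) / k`, so `c` decreases on
`(0, 1/2]` and increases on `[1/2, 1]`. Since `c 1 = 0`, `c` is negative on `[1/2, 1)`, so every zero
in `(0, 1)` lies in `(0, 1/2]`, where `c` is injective. A zero exists in `(0.31, 0.32)` by the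
intermediate value theorem, because `c 0.31 > 0 > c 0.32`; these two signs come from truncating
the series of `log (1 - x)` at `x = 0.38` and `x = 0.36`.
-/

open Real Set

namespace QuadSubLog

noncomputable def c (k : ℝ) : ℝ := (2 - k) * (k - 1) - log k

lemma c_eq_zero_iff {k : ℝ} : c k = 0 ↔ log k = (2 - k) * (k - 1) := by
  rw [c, sub_eq_zero, eq_comm]

lemma c_one : c 1 = 0 := by
  simp [c]

lemma hasDerivAt_c {x : ℝ} (hx : 0 < x) : HasDerivAt c (-((2 * x - 1) * (x - 1)) / x) x := by
  have hquad := ((hasDerivAt_id' x).const_sub 2).fun_mul ((hasDerivAt_id' x).sub_const 1)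
  exact (hquad.fun_sub (hasDerivAt_log hx.ne')).congr_deriv (by field_simp; ring)

lemma continuousOn_c : ContinuousOn c (Ioi 0) :=
  (by fun_prop : Continuous fun k : ℝ => (2 - k) * (k - 1)).continuousOn.sub
    (continuousOn_log.mono fun _ hx => ne_of_gt hx)

lemma strictAntiOn_c : StrictAntiOn c (Ioc 0 (1 / 2)) := by
  refine strictAntiOn_of_deriv_neg (convex_Ioc _ _) (continuousOn_c.mono fun _ hx => hx.1) ?_
  intro x hx
  rw [interior_Ioc] at hx
  rw [(hasDerivAt_c hx.1).deriv]
  have : 0 < (2 * x - 1) * (x - 1) := mul_pos_of_neg_of_neg (by linarith [hx.2]) (by linarith [hx.2])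
  exact div_neg_of_neg_of_pos (neg_neg_of_pos this) hx.1

lemma strictMonoOn_c : StrictMonoOn c (Icc (1 / 2) 1) := by
  refine strictMonoOn_of_deriv_pos (convex_Icc _ _)
    (continuousOn_c.mono fun x hx => (show (0 : ℝ) < 1 / 2 by norm_num).trans_le hx.1) ?_
  intro x hx
  rw [interior_Icc] at hx
  have hx0 : 0 < x := (show (0 : ℝ) < 1 / 2 by norm_num).trans hx.1
  rw [(hasDerivAt_c hx0).deriv]
  have : (2 * x - 1) * (x - 1) < 0 := mul_neg_of_pos_of_neg (by linarith [hx.1]) (by linarith [hx.2])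
  exact div_pos (neg_pos_of_neg this) hx0

lemma c_neg_of_mem_Ico {k : ℝ} (hk : k ∈ Ico (1 / 2) 1) : c k < 0 :=
  c_one ▸ strictMonoOn_c ⟨hk.1, hk.2.le⟩ ⟨by norm_num, le_rfl⟩ hk.2

lemma eq_of_c_eq_zero {a b : ℝ} (ha : a ∈ Ioo 0 1) (hb : b ∈ Ioo 0 1) (ha0 : c a = 0)
    (hb0 : c b = 0) : a = b := by
  have le_half {k : ℝ} (hk : k ∈ Ioo 0 1) (hk0 : c k = 0) : k ∈ Ioc 0 (1 / 2) := by
    refine ⟨hk.1, not_lt.1 fun h => ?_⟩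
    exact (c_neg_of_mem_Ico ⟨h.le, hk.2⟩).ne hk0
  exact strictAntiOn_c.injOn (le_half ha ha0) (le_half hb hb0) (ha0.trans hb0.symm)

lemma log_0_31_lt : log 0.31 < -1.1661 := by
  have hsplit : log 0.31 = log (1 - 0.38) - log 2 := by
    rw [← log_div (by norm_num) (by norm_num)]; norm_num
  have hseries := abs_log_sub_add_sum_range_le (x := 0.38) (by norm_num [abs_of_nonneg]) 7
  simp only [Finset.sum_range_succ, Finset.sum_range_zero, abs_le] at hseries
  norm_num at hseries
  linarith [hseries.2, log_two_gt_d9]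

lemma log_0_32_gt : -1.1424 < log 0.32 := by
  have hsplit : log 0.32 = log (1 - 0.36) - log 2 := by
    rw [← log_div (by norm_num) (by norm_num)]; norm_num
  have hseries := abs_log_sub_add_sum_range_le (x := 0.36) (by norm_num [abs_of_nonneg]) 7
  simp only [Finset.sum_range_succ, Finset.sum_range_zero, abs_le] at hseries
  norm_num at hseries
  linarith [hseries.1, log_two_lt_d9]

lemma exists_c_eq_zero : ∃ k ∈ Ioo (0.31 : ℝ) 0.32, c k = 0 := by
  have hpos : 0 < c 0.31 := by rw [c]; linarith [log_0_31_lt]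
  have hneg : c 0.32 < 0 := by rw [c]; linarith [log_0_32_gt]
  exact intermediate_value_Ioo' (by norm_num)
    (continuousOn_c.mono fun x hx => (show (0 : ℝ) < 0.31 by norm_num).trans_le hx.1) ⟨hneg, hpos⟩

end QuadSubLog

open QuadSubLog in
theorem stmt_13 :
    ∃ k : ℝ, (k ∈ Set.Ioo (0:ℝ) 1 ∧ Real.log k = (2 - k) * (k - 1))
      ∧ (∀ k' ∈ Set.Ioo (0:ℝ) 1, Real.log k' = (2 - k') * (k' - 1) → k' = k)
      ∧ k ∈ Set.Ioo (0.31 : ℝ) 0.32 := by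
  obtain ⟨k, hk, hk0⟩ := exists_c_eq_zero
  have hk01 : k ∈ Ioo (0 : ℝ) 1 := ⟨by linarith [hk.1], by linarith [hk.2]⟩
  exact ⟨k, ⟨hk01, c_eq_zero_iff.1 hk0⟩,
    fun k' hk' hk'0 => eq_of_c_eq_zero hk' hk01 (c_eq_zero_iff.2 hk'0) hk0, hk⟩
end

section
/- Let F be a continuous strictly increasing CDF with bounded continuous inverse. Define φ(k) = ∫₀^{1−k} F^{-1}(q) · (q/(1−q)) · (k/(1−k)) · (1/q − k/(q(1−q))) dq for k ∈ (0,1). Then the derivative of φ satisfies φ'(k) = (1/(1−k)²) ∫_k^1 F^{-1}(1−q) (1/q − (2k − k²)/q²) dq. -/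
/-! The substitution `q ↦ 1 - q` turns `φ(k)` into `k / (1 - k) * (A k - k * B k)` with
`A k = ∫_k^1 G(q) / q` and `B k = ∫_k^1 G(q) / q²`, where `G(q) = F⁻¹(1 - q)`. By the fundamental
theorem of calculus `A' = -G(k) / k` and `B' = -G(k) / k²`, and the product rule gives
`φ'(k) = (A k - (2k - k²) B k) / (1 - k)²`. -/

open MeasureTheory intervalIntegral Set Topology

theorem hasDerivAt_integral_left_of_continuousOn {f : ℝ → ℝ} {s : Set ℝ} {a b : ℝ}
    (hs : IsOpen s) (hf : ContinuousOn f s) (hab : uIcc a b ⊆ s) :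
    HasDerivAt (fun t => ∫ q in t..b, f q) (-f a) a :=
  have ha : a ∈ s := hab left_mem_uIcc
  integral_hasDerivAt_left ((hf.mono hab).intervalIntegrable)
    (hf.stronglyMeasurableAtFilter hs a ha) (hf.continuousAt (hs.mem_nhds ha))

theorem integral_reflect_eq (f : ℝ → ℝ) (t : ℝ) :
    ∫ q in (0:ℝ)..(1 - t), f q * (q / (1 - q)) * (t / (1 - t)) * (1 / q - t / (q * (1 - q)))
      = t / (1 - t) * ∫ q in t..1, f (1 - q) * (1 / q - t / q ^ 2) := by
  set h : ℝ → ℝ := fun p => t / (1 - t) * (f (1 - p) * (1 / p - t / p ^ 2))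
  calc _ = ∫ q in (0:ℝ)..(1 - t), h (1 - q) := by
        refine integral_congr_ae (((volume.ae_ne 0).and (volume.ae_ne 1)).mono
          fun q ⟨h0, h1⟩ _ => ?_)
        have h1' : (1:ℝ) - q ≠ 0 := sub_ne_zero.mpr h1.symm
        simp only [h, sub_sub_cancel]
        field_simp
    _ = ∫ p in (1 - (1 - t))..(1 - 0), h p := integral_comp_sub_left h 1
    _ = _ := by rw [sub_sub_cancel, sub_zero, intervalIntegral.integral_const_mul]

theorem integral_mul_one_div_sub_div_sq {g : ℝ → ℝ} (hg : Continuous g) {t : ℝ} (ht : 0 < t)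
    (c : ℝ) :
    ∫ q in t..1, g q * (1 / q - c / q ^ 2)
      = (∫ q in t..1, g q / q) - c * ∫ q in t..1, g q / q ^ 2 := by
  have hpos : uIcc t 1 ⊆ Ioi 0 := fun q hq => lt_of_lt_of_le (lt_min ht one_pos) hq.1
  have h1 : IntervalIntegrable (fun q => g q / q) volume t 1 :=
    (hg.continuousOn.div continuousOn_id fun q hq => (hpos hq).ne').intervalIntegrable
  have h2 : IntervalIntegrable (fun q => g q / q ^ 2) volume t 1 :=
    (hg.continuousOn.div (continuousOn_pow 2) fun q hq =>
      pow_ne_zero 2 (hpos hq).ne').intervalIntegrable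
  rw [← intervalIntegral.integral_const_mul, ← integral_sub h1 (h2.const_mul c)]
  exact integral_congr fun q _ => by ring

theorem stmt_15_general (Finv : ℝ → ℝ)
    (hFinvCont : Continuous Finv) :
    ∀ k ∈ Set.Ioo (0:ℝ) 1,
      HasDerivAt
        (fun k : ℝ => ∫ q in (0:ℝ)..(1 - k),
          Finv q * (q / (1 - q)) * (k / (1 - k)) * (1 / q - k / (q * (1 - q))))
        ((1 / (1 - k) ^ 2) *
          ∫ q in k..1, Finv (1 - q) * (1 / q - (2 * k - k ^ 2) / q ^ 2))
        k := by
  rintro k ⟨hk0, hk1⟩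
  set g : ℝ → ℝ := fun q => Finv (1 - q)
  have hg : Continuous g := hFinvCont.comp (continuous_const.sub continuous_id)
  have hpos : uIcc k 1 ⊆ Ioi 0 := fun q hq => lt_of_lt_of_le (lt_min hk0 one_pos) hq.1
  have hA : HasDerivAt (fun t => ∫ q in t..1, g q / q) (-(g k / k)) k :=
    hasDerivAt_integral_left_of_continuousOn isOpen_Ioi
      (hg.continuousOn.div continuousOn_id fun q hq => ne_of_gt hq) hpos
  have hB : HasDerivAt (fun t => ∫ q in t..1, g q / q ^ 2) (-(g k / k ^ 2)) k :=
    hasDerivAt_integral_left_of_continuousOn isOpen_Ioi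
      (hg.continuousOn.div (continuousOn_pow 2) fun q hq => pow_ne_zero 2 (ne_of_gt hq)) hpos
  have hodds : HasDerivAt (fun t : ℝ => t / (1 - t)) (1 / (1 - k) ^ 2) k :=
    ((hasDerivAt_id' k).fun_div ((hasDerivAt_id' k).const_sub 1)
      (sub_ne_zero.mpr hk1.ne')).congr_deriv (by ring)
  have hφ : (fun t : ℝ => ∫ q in (0:ℝ)..(1 - t),
        Finv q * (q / (1 - q)) * (t / (1 - t)) * (1 / q - t / (q * (1 - q))))
      =ᶠ[𝓝 k] fun t => t / (1 - t) *
        ((∫ q in t..1, g q / q) - t * ∫ q in t..1, g q / q ^ 2) := by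
    filter_upwards [Ioi_mem_nhds hk0] with t ht
    rw [integral_reflect_eq, integral_mul_one_div_sub_div_sq hg ht]
  rw [integral_mul_one_div_sub_div_sq hg hk0]
  refine ((hodds.fun_mul (hA.fun_sub ((hasDerivAt_id' k).fun_mul hB))).congr_of_eventuallyEq
    hφ).congr_deriv ?_
  have h1k : (1:ℝ) - k ≠ 0 := sub_ne_zero.mpr hk1.ne'
  field_simp
  ring

theorem stmt_15 (F Finv : ℝ → ℝ)
    (hF : Continuous F) (hFmono : StrictMono F)
    (hFinv : ∀ q ∈ Set.Icc (0:ℝ) 1, F (Finv q) = q)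
    (hFinvCont : Continuous Finv)
    (M : ℝ) (hM : ∀ q, |Finv q| ≤ M) :
    ∀ k ∈ Set.Ioo (0:ℝ) 1,
      HasDerivAt
        (fun k : ℝ => ∫ q in (0:ℝ)..(1 - k),
          Finv q * (q / (1 - q)) * (k / (1 - k)) * (1 / q - k / (q * (1 - q))))
        ((1 / (1 - k) ^ 2) *
          ∫ q in k..1, Finv (1 - q) * (1 / q - (2 * k - k ^ 2) / q ^ 2))
        k :=
  stmt_15_general Finv hFinvCont
end

section
/- Let a_1,…,a_n and b_1,…,b_n be real numbers with b_i > 0 and a_1/b_1 ≤ a_2/b_2 ≤ … ≤ a_n/b_n, where at least one of the ratio inequalities is strict. Define A(x) = Σ_{i=1}^n a_i x^i and B(x) = Σ_{i=1}^n b_i x^i. Then A(x)/B(x) is monotone non-decreasing on (0, ∞). -/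
/-! For `0 < x ≤ y`, cross-multiplying `A x / B x ≤ A y / B y` and expanding gives a double sum
which, after symmetrising in `i ↔ j`, has the terms
`(aᵢ bⱼ - aⱼ bᵢ) (xⁱ yʲ - xʲ yⁱ)`; for `i ≤ j` the first factor is `≤ 0` because the ratios
`aᵢ / bᵢ` increase, and the second is `≥ 0` because `(y / x)ʲ⁻ⁱ ≥ 1`. -/

open Finset

section OrderedRing

variable {R : Type*} [CommRing R] [LinearOrder R] [IsStrictOrderedRing R]

theorem Finset.sum_mul_sum_le_sum_mul_sum_of_cross_nonpos {ι : Type*} (s : Finset ι)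
    (p q r t : ι → R)
    (h : ∀ i ∈ s, ∀ j ∈ s, (p i * q j - p j * q i) * (r i * t j - r j * t i) ≤ 0) :
    (∑ i ∈ s, p i * r i) * (∑ j ∈ s, q j * t j) ≤ (∑ i ∈ s, p i * t i) * (∑ j ∈ s, q j * r j) := by
  set D : ι → ι → R := fun i j => p i * r i * (q j * t j) - p i * t i * (q j * r j)
  have hD : ∑ i ∈ s, ∑ j ∈ s, D i j =
      (∑ i ∈ s, p i * r i) * (∑ j ∈ s, q j * t j)
        - (∑ i ∈ s, p i * t i) * (∑ j ∈ s, q j * r j) := by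
    simp only [D, sum_mul_sum, ← sum_sub_distrib]
  have hsymm : ∑ i ∈ s, ∑ j ∈ s, (p i * q j - p j * q i) * (r i * t j - r j * t i) =
      2 * ∑ i ∈ s, ∑ j ∈ s, D i j := by
    have hsplit : ∀ i j, (p i * q j - p j * q i) * (r i * t j - r j * t i) = D i j + D j i :=
      fun i j => by simp only [D]; ring
    simp only [hsplit, sum_add_distrib]
    rw [sum_comm (f := fun i j => D j i)]
    ring
  have hnonpos := sum_nonpos fun i hi => sum_nonpos fun j hj => h i hi j hj
  linarith

theorem pow_mul_pow_le_pow_mul_pow {x y : R} (hx : 0 ≤ x) (hxy : x ≤ y) {i j : ℕ} (hij : i ≤ j) :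
    x ^ j * y ^ i ≤ x ^ i * y ^ j := by
  obtain ⟨k, rfl⟩ := Nat.exists_eq_add_of_le hij
  have hxk : x ^ k ≤ y ^ k := pow_le_pow_left₀ hx hxy k
  have hxy_i : 0 ≤ x ^ i * y ^ i := mul_nonneg (pow_nonneg hx i) (pow_nonneg (hx.trans hxy) i)
  calc x ^ (i + k) * y ^ i = x ^ i * y ^ i * x ^ k := by ring
    _ ≤ x ^ i * y ^ i * y ^ k := mul_le_mul_of_nonneg_left hxk hxy_i
    _ = x ^ i * y ^ (i + k) := by ring

end OrderedRing

theorem monotoneOn_sum_mul_pow_div_sum_mul_pow {R : Type*} [Field R] [LinearOrder R]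
    [IsStrictOrderedRing R] (s : Finset ℕ) (a b : ℕ → R)
    (hb : ∀ i ∈ s, 0 < b i) (hratio : MonotoneOn (fun i => a i / b i) s) :
    MonotoneOn (fun x : R => (∑ i ∈ s, a i * x ^ i) / (∑ i ∈ s, b i * x ^ i)) (Set.Ioi 0) := by
  rcases s.eq_empty_or_nonempty with rfl | hs
  · simp [MonotoneOn]
  intro x (hx : 0 < x) y (hy : 0 < y) hxy
  have hB : ∀ z : R, 0 < z → 0 < ∑ i ∈ s, b i * z ^ i := fun z hz =>
    sum_pos (fun i hi => mul_pos (hb i hi) (pow_pos hz i)) hs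
  have hcross : ∀ i ∈ s, ∀ j ∈ s, i ≤ j → a i * b j ≤ a j * b i := fun i hi j hj hij =>
    (div_le_div_iff₀ (hb i hi) (hb j hj)).1 (hratio hi hj hij)
  rw [div_le_div_iff₀ (hB x hx) (hB y hy)]
  refine sum_mul_sum_le_sum_mul_sum_of_cross_nonpos s a b (x ^ ·) (y ^ ·) fun i hi j hj => ?_
  rcases le_total i j with hij | hji
  · exact mul_nonpos_of_nonpos_of_nonneg (sub_nonpos.2 (hcross i hi j hj hij))
      (sub_nonneg.2 (pow_mul_pow_le_pow_mul_pow hx.le hxy hij))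
  · exact mul_nonpos_of_nonneg_of_nonpos (sub_nonneg.2 (hcross j hj i hi hji))
      (sub_nonpos.2 (pow_mul_pow_le_pow_mul_pow hx.le hxy hji))

theorem stmt_18_general (n : ℕ) (a b : ℕ → ℝ)
    (hb : ∀ i ∈ Finset.Icc 1 n, 0 < b i)
    (hmono : ∀ i, 1 ≤ i → i < n → a i / b i ≤ a (i + 1) / b (i + 1)) :
    MonotoneOn
      (fun x : ℝ => (∑ i ∈ Finset.Icc 1 n, a i * x ^ i) / (∑ i ∈ Finset.Icc 1 n, b i * x ^ i))
      (Set.Ioi 0) := by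
  refine monotoneOn_sum_mul_pow_div_sum_mul_pow _ a b hb ?_
  rw [coe_Icc]
  refine monotoneOn_of_le_succ Set.ordConnected_Icc fun i _ hi hsucc => ?_
  rw [Order.succ_eq_add_one] at hsucc ⊢
  exact hmono i hi.1 (Nat.lt_of_succ_le hsucc.2)

theorem stmt_18 (n : ℕ) (a b : ℕ → ℝ)
    (hb : ∀ i ∈ Finset.Icc 1 n, 0 < b i)
    (hmono : ∀ i, 1 ≤ i → i < n → a i / b i ≤ a (i + 1) / b (i + 1))
    (hstrict : ∃ i, 1 ≤ i ∧ i < n ∧ a i / b i < a (i + 1) / b (i + 1)) :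
    MonotoneOn
      (fun x : ℝ => (∑ i ∈ Finset.Icc 1 n, a i * x ^ i) / (∑ i ∈ Finset.Icc 1 n, b i * x ^ i))
      (Set.Ioi 0) :=
  stmt_18_general n a b hb hmono
end

section
/- For integers n ≥ 2 and 1 ≤ m ≤ n−1, and for q ∈ (0,1), the function g(q) = (Σ_{j=1}^{m} C(n−1, j−1)(1−q)^{n−j} q^{j−1}) / (Σ_{j=1}^{m+1} C(n−1, j−1)(1−q)^{n−j} q^{j−1}) · (q/(1−q)) is monotone non-decreasing in q. -/
open Finset

private lemma choose_ineq (N : ℕ) {i j : ℕ} (hi : 1 ≤ i) (hij : i ≤ j) :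
    N.choose (i - 1) * N.choose j ≤ N.choose i * N.choose (j - 1) := by
  induction j, hij using Nat.le_induction with
  | base =>
    rw [Nat.mul_comm]
  | succ j hj ih =>
    have hj1 : 1 ≤ j := le_trans hi hj
    have key : N.choose (j + 1) * (j + 1) = N.choose j * (N - j) :=
      Nat.choose_succ_right_eq N j
    have key2 : N.choose j * j = N.choose (j - 1) * (N - (j - 1)) := by
      have h := Nat.choose_succ_right_eq N (j - 1)
      have e : j - 1 + 1 = j := by omega
      rwa [e] at h
    have hstep : N.choose (j - 1) * (N - j) ≤ N.choose j * (j + 1) := by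
      calc N.choose (j - 1) * (N - j) ≤ N.choose (j - 1) * (N - (j - 1)) :=
            Nat.mul_le_mul_left _ (Nat.sub_le_sub_left (Nat.sub_le j 1) N)
        _ = N.choose j * j := key2.symm
        _ ≤ N.choose j * (j + 1) := Nat.mul_le_mul_left _ (Nat.le_succ j)
    have main : N.choose (i - 1) * N.choose (j + 1) * (j + 1)
        ≤ N.choose i * N.choose j * (j + 1) := by
      calc N.choose (i - 1) * N.choose (j + 1) * (j + 1)
          = N.choose (i - 1) * (N.choose (j + 1) * (j + 1)) := by ring
        _ = N.choose (i - 1) * (N.choose j * (N - j)) := by rw [key]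
        _ = N.choose (i - 1) * N.choose j * (N - j) := by ring
        _ ≤ N.choose i * N.choose (j - 1) * (N - j) := Nat.mul_le_mul_right _ ih
        _ = N.choose i * (N.choose (j - 1) * (N - j)) := by ring
        _ ≤ N.choose i * (N.choose j * (j + 1)) := Nat.mul_le_mul_left _ hstep
        _ = N.choose i * N.choose j * (j + 1) := by ring
    have h2 := Nat.le_of_mul_le_mul_right main (Nat.succ_pos j)
    simpa using h2

private lemma sum_sum_nonpos (s : Finset ℕ) (f : ℕ → ℕ → ℝ)
    (h : ∀ i ∈ s, ∀ j ∈ s, f i j + f j i ≤ 0) :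
    ∑ i ∈ s, ∑ j ∈ s, f i j ≤ 0 := by
  have h1 : ∑ i ∈ s, ∑ j ∈ s, (f i j + f j i) ≤ 0 :=
    Finset.sum_nonpos fun i hi => Finset.sum_nonpos fun j hj => h i hi j hj
  have h2 : ∑ i ∈ s, ∑ j ∈ s, (f i j + f j i)
      = (∑ i ∈ s, ∑ j ∈ s, f i j) + (∑ i ∈ s, ∑ j ∈ s, f j i) := by
    simp [Finset.sum_add_distrib]
  have h3 : ∑ i ∈ s, ∑ j ∈ s, f j i = ∑ i ∈ s, ∑ j ∈ s, f i j := Finset.sum_comm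
  rw [h2, h3] at h1
  linarith

private noncomputable def bcoef (N k : ℕ) : ℝ := if k = 0 then 0 else (N.choose (k - 1) : ℝ)

private noncomputable def acoef (N k : ℕ) : ℝ := (N.choose k : ℝ)

private noncomputable def cfun (n k : ℕ) (q : ℝ) : ℝ := (1 - q) ^ (n - k) * q ^ k

private lemma bcoef_nonneg (N k : ℕ) : 0 ≤ bcoef N k := by
  unfold bcoef; split <;> positivity

private lemma acoef_nonneg (N k : ℕ) : 0 ≤ acoef N k := by
  unfold acoef; positivity

private lemma ba_ineq (N : ℕ) {i j : ℕ} (hij : i ≤ j) :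
    bcoef N i * acoef N j ≤ bcoef N j * acoef N i := by
  rcases Nat.eq_zero_or_pos i with hi | hi
  · subst hi
    have hb : bcoef N 0 = 0 := by simp [bcoef]
    rw [hb, zero_mul]
    exact mul_nonneg (bcoef_nonneg N j) (acoef_nonneg N 0)
  · have hj : j ≠ 0 := by omega
    simp only [bcoef, if_neg (by omega : i ≠ 0), if_neg hj, acoef]
    exact_mod_cast (choose_ineq N hi hij).trans_eq (Nat.mul_comm _ _)

private lemma cfun_nonneg {n k : ℕ} {q : ℝ} (h0 : 0 ≤ q) (h1 : q ≤ 1) :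
    0 ≤ cfun n k q := by
  unfold cfun
  have : (0:ℝ) ≤ 1 - q := by linarith
  positivity

private lemma c_ineq {n i j : ℕ} (hij : i ≤ j) (hjn : j ≤ n) {q1 q2 : ℝ}
    (hq1 : 0 < q1) (hq1' : q1 < 1) (hq2 : 0 < q2) (hq2' : q2 < 1) (hle : q1 ≤ q2) :
    cfun n j q1 * cfun n i q2 ≤ cfun n i q1 * cfun n j q2 := by
  obtain ⟨d, rfl⟩ : ∃ d, j = i + d := ⟨j - i, by omega⟩
  have hni : n - i = (n - (i + d)) + d := by omega
  have hA : (0:ℝ) ≤ 1 - q1 := by linarith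
  have hB : (0:ℝ) ≤ 1 - q2 := by linarith
  have key : (q1 * (1 - q2)) ^ d ≤ ((1 - q1) * q2) ^ d := by
    apply pow_le_pow_left₀ (by positivity)
    nlinarith
  have hK : (0:ℝ) ≤ (1 - q1) ^ (n - (i + d)) * (1 - q2) ^ (n - (i + d)) * q1 ^ i * q2 ^ i := by
    positivity
  unfold cfun
  calc (1 - q1) ^ (n - (i + d)) * q1 ^ (i + d) * ((1 - q2) ^ (n - i) * q2 ^ i)
      = ((1 - q1) ^ (n - (i + d)) * (1 - q2) ^ (n - (i + d)) * q1 ^ i * q2 ^ i)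
          * (q1 * (1 - q2)) ^ d := by
        rw [hni, mul_pow, pow_add, pow_add]; ring
    _ ≤ ((1 - q1) ^ (n - (i + d)) * (1 - q2) ^ (n - (i + d)) * q1 ^ i * q2 ^ i)
          * ((1 - q1) * q2) ^ d := mul_le_mul_of_nonneg_left key hK
    _ = (1 - q1) ^ (n - i) * q1 ^ i * ((1 - q2) ^ (n - (i + d)) * q2 ^ (i + d)) := by
        rw [hni, mul_pow, pow_add, pow_add]; ring

private lemma numer_eq (n m : ℕ) (hn : 2 ≤ n) (hmn : m ≤ n - 1) (q : ℝ) :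
    (∑ j ∈ Finset.Icc 1 m, ((n - 1).choose (j - 1) : ℝ) * (1 - q) ^ (n - j) * q ^ (j - 1)) * q
      = ∑ k ∈ Finset.range (m + 1), bcoef (n - 1) k * cfun n k q := by
  rw [Finset.sum_mul, ← Finset.Ico_add_one_right_eq_Icc, Finset.sum_Ico_eq_sum_range]
  rw [Finset.sum_range_succ']
  have h0 : bcoef (n - 1) 0 * cfun n 0 q = 0 := by simp [bcoef]
  rw [h0, add_zero]
  have hm : m + 1 - 1 = m := by omega
  rw [hm]
  apply Finset.sum_congr rfl
  intro i hi
  have hi' : i < m := Finset.mem_range.mp hi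
  have e1 : 1 + i - 1 = i := by omega
  have e2 : bcoef (n - 1) (i + 1) = ((n - 1).choose i : ℝ) := by simp [bcoef]
  rw [e1, e2]
  unfold cfun
  have e3 : n - (1 + i) = n - (i + 1) := by omega
  rw [e3, pow_succ]
  ring

private lemma denom_eq (n m : ℕ) (hn : 2 ≤ n) (hmn : m ≤ n - 1) (q : ℝ) :
    (∑ j ∈ Finset.Icc 1 (m + 1), ((n - 1).choose (j - 1) : ℝ) * (1 - q) ^ (n - j) * q ^ (j - 1))
        * (1 - q)
      = ∑ k ∈ Finset.range (m + 1), acoef (n - 1) k * cfun n k q := by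
  rw [Finset.sum_mul, ← Finset.Ico_add_one_right_eq_Icc, Finset.sum_Ico_eq_sum_range]
  have hm : m + 1 + 1 - 1 = m + 1 := by omega
  rw [hm]
  apply Finset.sum_congr rfl
  intro i hi
  have hi' : i < m + 1 := Finset.mem_range.mp hi
  have e1 : 1 + i - 1 = i := by omega
  rw [e1]
  unfold acoef cfun
  have e3 : n - (1 + i) + 1 = n - i := by omega
  rw [← e3, pow_succ]
  ring

private lemma denom_pos (n m : ℕ) (hn : 2 ≤ n) {q : ℝ} (h0 : 0 < q) (h1 : q < 1) :
    0 < ∑ k ∈ Finset.range (m + 1), acoef (n - 1) k * cfun n k q := by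
  apply Finset.sum_pos'
  · intro k hk
    exact mul_nonneg (acoef_nonneg _ _) (cfun_nonneg h0.le h1.le)
  · refine ⟨0, Finset.mem_range.mpr (Nat.succ_pos m), ?_⟩
    simp only [acoef, Nat.choose_zero_right, Nat.cast_one, one_mul, cfun, Nat.sub_zero, pow_zero,
      mul_one]
    have : (0:ℝ) < 1 - q := by linarith
    positivity

theorem stmt_19 (n m : ℕ) (hn : 2 ≤ n) (hm1 : 1 ≤ m) (hmn : m ≤ n - 1) :
    MonotoneOn
      (fun q : ℝ =>
        (∑ j ∈ Finset.Icc 1 m, ((n - 1).choose (j - 1) : ℝ) * (1 - q) ^ (n - j) * q ^ (j - 1)) /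
          (∑ j ∈ Finset.Icc 1 (m + 1),
            ((n - 1).choose (j - 1) : ℝ) * (1 - q) ^ (n - j) * q ^ (j - 1)) *
          (q / (1 - q)))
      (Set.Ioo 0 1) := by
  intro q1 hq1 q2 hq2 hle
  obtain ⟨h10, h11⟩ := hq1
  obtain ⟨h20, h21⟩ := hq2
  simp only
  rw [div_mul_div_comm, div_mul_div_comm]
  rw [numer_eq n m hn hmn q1, numer_eq n m hn hmn q2,
    denom_eq n m hn hmn q1, denom_eq n m hn hmn q2]
  rw [div_le_div_iff₀ (denom_pos n m hn h10 h11) (denom_pos n m hn h20 h21)]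
  rw [Finset.sum_mul_sum, Finset.sum_mul_sum]
  rw [← sub_nonpos, ← Finset.sum_sub_distrib]
  simp only [← Finset.sum_sub_distrib]
  apply sum_sum_nonpos
  intro i hi j hj
  have hi' : i ≤ n - 1 := by have := Finset.mem_range.mp hi; omega
  have hj' : j ≤ n - 1 := by have := Finset.mem_range.mp hj; omega
  have hin : i ≤ n := by omega
  have hjn : j ≤ n := by omega
  have pair : ∀ a b : ℕ, a ≤ b → b ≤ n →
      bcoef (n - 1) a * cfun n a q1 * (acoef (n - 1) b * cfun n b q2) -
        bcoef (n - 1) a * cfun n a q2 * (acoef (n - 1) b * cfun n b q1) +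
      (bcoef (n - 1) b * cfun n b q1 * (acoef (n - 1) a * cfun n a q2) -
        bcoef (n - 1) b * cfun n b q2 * (acoef (n - 1) a * cfun n a q1)) ≤ 0 := by
    intro a b hab hbn
    have heq : bcoef (n - 1) a * cfun n a q1 * (acoef (n - 1) b * cfun n b q2) -
        bcoef (n - 1) a * cfun n a q2 * (acoef (n - 1) b * cfun n b q1) +
      (bcoef (n - 1) b * cfun n b q1 * (acoef (n - 1) a * cfun n a q2) -
        bcoef (n - 1) b * cfun n b q2 * (acoef (n - 1) a * cfun n a q1))
        = (bcoef (n - 1) a * acoef (n - 1) b - bcoef (n - 1) b * acoef (n - 1) a) *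
          (cfun n a q1 * cfun n b q2 - cfun n b q1 * cfun n a q2) := by ring
    rw [heq]
    apply mul_nonpos_iff.mpr
    right
    constructor
    · have := ba_ineq (n - 1) hab
      linarith
    · have := c_ineq hab hbn h10 h11 h20 h21 hle
      linarith
  rcases le_total i j with hij | hji
  · exact pair i j hij hjn
  · have := pair j i hji hin
    linarith
end
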